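/- Conversely, with the same preservation hypothesis, if the cotensor functor − □_C N: Comod-C → Comod-D has a left adjoint, then N is quasi-finite as a right D-comodule (i.e. − ⊗_A N: Mod-A → Comod-D has a left adjoint). -/

import Mathlib

/-! # Preamble: corings and comodules
We follow "Separable functors in corings" (J. Gómez-Torrecillas).
`K`-algebras are monoid objects in `ModuleCat K`; a `T`-`A`-bimodule is a
1-morphism `T ⟶ A` in the bicategory of algebras and bimodules, whose
composition is the tensor product over the middle algebra. -/

open CategoryTheory Limits Bicategory

noncomputable section
universe u

namespace CoringSep

variable (K : Type u) [CommRing K]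

open MonoidalCategory in
instance (X : ModuleCat.{u} K) : PreservesColimitsOfSize.{0,0} (tensorLeft X) := by
  have : PreservesColimits (tensorLeft X) := (ihom.adjunction X).leftAdjoint_preservesColimits
  exact preservesSmallestColimits_of_preservesColimits _

open MonoidalCategory in
instance (X : ModuleCat.{u} K) : PreservesColimitsOfSize.{0,0} (tensorRight X) := by
  have : PreservesColimits (tensorRight X) :=
    preservesColimits_of_natIso
      (NatIso.ofComponents (fun Y => β_ X Y) (fun f => by simp) :
        tensorLeft X ≅ tensorRight X)
  exact preservesSmallestColimits_of_preservesColimits _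

/-- `K`-algebras (as monoid objects in `K`-modules), wrapped so that they form
a bicategory whose 1-morphisms `A ⟶ B` are `A`-`B`-bimodules and where
composition of 1-morphisms is `⊗_B`. -/
structure Alg where
  val : Mon (ModuleCat.{u} K)

variable {K}

instance : Bicategory (Alg K) where
  Hom X Y := Bimod X.val Y.val
  homCategory X Y := (inferInstance : Category (Bimod X.val Y.val))
  id X := Bimod.regular X.val
  comp M N := M.tensorBimod N
  whiskerLeft L _ _ f := Bimod.whiskerLeft L f
  whiskerRight f N := Bimod.whiskerRight f N
  associator := Bimod.associatorBimod
  leftUnitor := Bimod.leftUnitorBimod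
  rightUnitor := Bimod.rightUnitorBimod
  whiskerLeft_id _ _ := Bimod.whiskerLeft_id_bimod
  whiskerLeft_comp M _ _ _ f g := Bimod.whiskerLeft_comp_bimod M f g
  id_whiskerLeft := Bimod.id_whiskerLeft_bimod
  comp_whiskerLeft M N _ _ f := Bimod.comp_whiskerLeft_bimod M N f
  id_whiskerRight _ _ := Bimod.id_whiskerRight_bimod
  comp_whiskerRight f g Q := Bimod.comp_whiskerRight_bimod f g Q
  whiskerRight_id := Bimod.whiskerRight_id_bimod
  whiskerRight_comp := Bimod.whiskerRight_comp_bimod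
  whisker_assoc M _ _ f P := Bimod.whisker_assoc_bimod M f P
  whisker_exchange := Bimod.whisker_exchange_bimod
  pentagon := Bimod.pentagon_bimod
  triangle := Bimod.triangle_bimod

variable (K) in
/-- The base ring `K`, as a `K`-algebra; right `A`-modules are the
1-morphisms `base K ⟶ A`. -/
def base : Alg K := ⟨Mon.trivial (ModuleCat.{u} K)⟩

variable {a b s t : Alg K}

/-- An `A`-coring: an `A`-bimodule `X` together with a coassociative,
counital `A`-bimodule comultiplication `X ⟶ X ⊗_A X`. -/
structure Coring (a : Alg K) where
  X : a ⟶ a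
  comul : X ⟶ X ≫ X
  counit : X ⟶ 𝟙 a
  coassoc : comul ≫ comul ▷ X ≫ (α_ X X X).hom = comul ≫ X ◁ comul
  comul_counit : comul ≫ X ◁ counit ≫ (ρ_ X).hom = 𝟙 X
  counit_comul : comul ≫ counit ▷ X ≫ (λ_ X).hom = 𝟙 X

/-- A right `C`-comodule which is a `T`-`A`-bimodule with `T`-linear coaction;
plain right `C`-comodules are obtained for `T = base K`. -/
structure RightComodule (t : Alg K) {a : Alg K} (C : Coring a) where
  M : t ⟶ a
  coact : M ⟶ M ≫ C.X
  coassoc : coact ≫ coact ▷ C.X ≫ (α_ M C.X C.X).hom = coact ≫ M ◁ C.comul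
  counit : coact ≫ M ◁ C.counit ≫ (ρ_ M).hom = 𝟙 M

/-- A left `C`-comodule which is an `A`-`S`-bimodule with `S`-linear coaction. -/
structure LeftComodule {a : Alg K} (C : Coring a) (s : Alg K) where
  M : a ⟶ s
  coact : M ⟶ C.X ≫ M
  coassoc : coact ≫ C.comul ▷ M ≫ (α_ C.X C.X M).hom = coact ≫ C.X ◁ coact
  counit : coact ≫ C.counit ▷ M ≫ (λ_ M).hom = 𝟙 M

/-- A `C'`-`C`-bicomodule. -/
structure Bicomodule {a' a : Alg K} (C' : Coring a') (C : Coring a) where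
  M : a' ⟶ a
  rcoact : M ⟶ M ≫ C.X
  lcoact : M ⟶ C'.X ≫ M
  rcoassoc : rcoact ≫ rcoact ▷ C.X ≫ (α_ M C.X C.X).hom = rcoact ≫ M ◁ C.comul
  rcounit : rcoact ≫ M ◁ C.counit ≫ (ρ_ M).hom = 𝟙 M
  lcoassoc : lcoact ≫ C'.comul ▷ M ≫ (α_ C'.X C'.X M).hom = lcoact ≫ C'.X ◁ lcoact
  lcounit : lcoact ≫ C'.counit ▷ M ≫ (λ_ M).hom = 𝟙 M
  compat : rcoact ≫ lcoact ▷ C.X ≫ (α_ C'.X M C.X).hom = lcoact ≫ C'.X ◁ rcoact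

variable {C : Coring a}

/-- The right comodule underlying a bicomodule. -/
def Bicomodule.toRight {a' : Alg K} {C' : Coring a'} (M : Bicomodule C' C) :
    RightComodule a' C := ⟨M.M, M.rcoact, M.rcoassoc, M.rcounit⟩

/-- The left comodule underlying a bicomodule. -/
def Bicomodule.toLeft {a' : Alg K} {C' : Coring a'} (M : Bicomodule C' C) :
    LeftComodule C' a := ⟨M.M, M.lcoact, M.lcoassoc, M.lcounit⟩

/-- The coring `C`, considered as a right comodule over itself. -/
def coregular (C : Coring a) : RightComodule a C :=
  ⟨C.X, C.comul, C.coassoc, C.comul_counit⟩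

/-- Morphisms of right `C`-comodules. -/
@[ext] structure ComodHom (M N : RightComodule t C) where
  f : M.M ⟶ N.M
  colinear : M.coact ≫ f ▷ C.X = f ≫ N.coact

instance : Category (RightComodule t C) where
  Hom := ComodHom
  id M := ⟨𝟙 M.M, by simp⟩
  comp f g := ⟨f.f ≫ g.f, by
    rw [Bicategory.comp_whiskerRight, ← Category.assoc, f.colinear, Category.assoc, g.colinear,
      Category.assoc]⟩

@[simp] theorem comod_id_f (M : RightComodule t C) : (𝟙 M : ComodHom M M).f = 𝟙 M.M := rfl
@[simp] theorem comod_comp_f {M N P : RightComodule t C} (f : M ⟶ N) (g : N ⟶ P) :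
    (f ≫ g).f = f.f ≫ g.f := rfl

@[ext] theorem comodHom_ext' {M N : RightComodule t C} (f g : M ⟶ N) (h : f.f = g.f) : f = g :=
  ComodHom.ext h

/-- The category of (plain) right comodules over a coring. -/
abbrev Comod (C : Coring a) := RightComodule (base K) C

@[simp] lemma bimod_comp_hom {x y : Alg K} {M N P : x ⟶ y} (f : M ⟶ N) (g : N ⟶ P) :
    (f ≫ g).hom = f.hom ≫ g.hom := rfl

@[simp] lemma bimod_id_hom {x y : Alg K} (M : x ⟶ y) :
    Bimod.Hom.hom (𝟙 M) = 𝟙 M.X := rfl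

/-- The forgetful functor from right `C`-comodules to the underlying
bimodule (module) category. -/
def forgetComod (t : Alg K) (C : Coring a) : RightComodule t C ⥤ (t ⟶ a) where
  obj M := M.M
  map f := f.f

/-- The functor `- ⊗_A N` given by postcomposition with a 1-morphism (an
`A`-`S`-bimodule) `N`. -/
def postF (t : Alg K) (N : a ⟶ s) : (t ⟶ a) ⥤ (t ⟶ s) where
  obj M := M ≫ N
  map f := f ▷ N

/-- The functor `W ⊗_A -` given by precomposition with a `T`-`A`-bimodule `W`. -/
def preF (W : t ⟶ a) (s : Alg K) : (a ⟶ s) ⥤ (t ⟶ s) where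
  obj N := W ≫ N
  map f := W ◁ f

/-- A functor *preserves the equalizer* of a pair `(f, g)` if it sends any
equalizer fork of `(f, g)` to a limit cone. -/
def PreservesEqualizerOf {𝒞 𝒟 : Type*} [Category 𝒞] [Category 𝒟] (F : 𝒞 ⥤ 𝒟)
    {X Y : 𝒞} (f g : X ⟶ Y) : Prop :=
  ∀ c : Fork f g, IsLimit c → Nonempty (IsLimit (F.mapCone c))

/-- `N` is flat as a left `A`-module: `- ⊗_A N` preserves all equalizers of
right `A`-module maps. -/
def LeftFlat (N : a ⟶ s) : Prop :=
  ∀ (t : Alg K) {X Y : t ⟶ a} (f g : X ⟶ Y), PreservesEqualizerOf (postF t N) f g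

/-- `W` is flat as a right `A`-module: `W ⊗_A -` preserves all equalizers of
left `A`-module maps. -/
def RightFlat (W : t ⟶ a) : Prop :=
  ∀ (s : Alg K) {X Y : a ⟶ s} (f g : X ⟶ Y), PreservesEqualizerOf (preF W s) f g

section Cotensor

/-- The first map `ρ_M ⊗_A N` in the equalizer diagram defining the cotensor
product `M □_C N`. -/
def cotensorFst (M : RightComodule t C) (N : LeftComodule C s) :
    M.M ≫ N.M ⟶ (M.M ≫ C.X) ≫ N.M :=
  M.coact ▷ N.M

/-- The second map `M ⊗_A λ_N` in the equalizer diagram defining `M □_C N`. -/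
def cotensorSnd (M : RightComodule t C) (N : LeftComodule C s) :
    M.M ≫ N.M ⟶ (M.M ≫ C.X) ≫ N.M :=
  M.M ◁ N.coact ≫ (α_ M.M C.X N.M).inv

/-- A choice of cotensor product `M □_C N`: an equalizer of the pair
`(ρ_M ⊗_A N, M ⊗_A λ_N)` in the category of `T`-`S`-bimodules. -/
structure CotensorFork (M : RightComodule t C) (N : LeftComodule C s) where
  pt : t ⟶ s
  ι : pt ⟶ M.M ≫ N.M
  w : ι ≫ cotensorFst M N = ι ≫ cotensorSnd M N
  isLimit : IsLimit (Fork.ofι ι w)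

end Cotensor

/-- A functor `F` is *separable* if the natural transformation
`Hom(-,-) ⟶ Hom(F-,F-)` of bifunctors is a split monomorphism, i.e. admits a
retraction `ζ` natural in both variables. -/
def Functor.Separable {𝒞 𝒟 : Type*} [Category 𝒞] [Category 𝒟] (F : 𝒞 ⥤ 𝒟) : Prop :=
  ∃ ζ : ∀ X Y : 𝒞, (F.obj X ⟶ F.obj Y) → (X ⟶ Y),
    (∀ (X Y : 𝒞) (f : X ⟶ Y), ζ X Y (F.map f) = f) ∧
    (∀ (X X' Y Y' : 𝒞) (x : X' ⟶ X) (y : Y ⟶ Y') (h : F.obj X ⟶ F.obj Y),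
      ζ X' Y' (F.map x ≫ h ≫ F.map y) = x ≫ ζ X Y h ≫ y)

end CoringSep
namespace CoringSep
open CategoryTheory Limits Bicategory

variable {K : Type u} [CommRing K] {a b s t : Alg K} {C : Coring a} {D : Coring b}

/-- The right `D`-comodule `X ⊗_A N` obtained by tensoring a right `D`-comodule
`N` (with underlying `A`-`B`-bimodule) by a `T`-`A`-bimodule `X`. -/
def lextendObj (X : t ⟶ a) (N : RightComodule a D) : RightComodule t D where
  M := X ≫ N.M
  coact := X ◁ N.coact ≫ (α_ X N.M D.X).inv
  coassoc := by
    have hc : (α_ X (N.M ≫ D.X) D.X).inv ≫ (α_ X N.M D.X).inv ▷ D.X ≫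
        (α_ (X ≫ N.M) D.X D.X).hom =
        X ◁ (α_ N.M D.X D.X).hom ≫ (α_ X N.M (D.X ≫ D.X)).inv := by
      bicategory_coherence
    simp only [Bicategory.comp_whiskerRight, Bicategory.whisker_assoc,
      Bicategory.comp_whiskerLeft, Category.assoc, Iso.inv_hom_id_assoc]
    rw [hc, ← Bicategory.whiskerLeft_comp_assoc, ← Bicategory.whiskerLeft_comp_assoc,
      Category.assoc, N.coassoc]
    simp only [Bicategory.whiskerLeft_comp, Category.assoc]
  counit := by
    simp only [Bicategory.comp_whiskerLeft, Category.assoc, Iso.inv_hom_id_assoc]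
    rw [← whiskerLeft_rightUnitor]
    simp only [← Bicategory.whiskerLeft_comp, Category.assoc]
    rw [N.counit]
    simp
end CoringSep

namespace CoringSep
open CategoryTheory Limits Bicategory

variable {K : Type u} [CommRing K] {a b s t : Alg K} {C : Coring a} {D : Coring b}

/-- The functor `- ⊗_A N : Mod-(T,A) ⥤ Comod-(T,D)` induced by a right
`D`-comodule `N` with underlying `A`-`B`-bimodule. -/
def lextendF (t : Alg K) (N : RightComodule a D) : (t ⟶ a) ⥤ RightComodule t D where
  obj X := lextendObj X N
  map {X Y} f :=
    ⟨f ▷ N.M, by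
      dsimp [lextendObj]
      rw [Category.assoc, ← associator_inv_naturality_left, whisker_exchange_assoc]⟩
  map_id X := by ext; simp [lextendObj]
  map_comp f g := by ext; simp [lextendObj]

end CoringSep

namespace CoringSep
open CategoryTheory Limits

section Helpers
open MonoidalCategory
variable {K : Type u} [CommRing K]

lemma triv_one_act (X : ModuleCat.{u} K) :
    ((𝟙 (𝟙_ (ModuleCat K))) ▷ X) ≫ (λ_ X).hom = (λ_ X).hom := by simp

lemma triv_left_assoc (X : ModuleCat.{u} K) :
    ((λ_ (𝟙_ (ModuleCat K))).hom ▷ X) ≫ (λ_ X).hom =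
      (α_ (𝟙_ (ModuleCat K)) (𝟙_ (ModuleCat K)) X).hom ≫
        ((𝟙_ (ModuleCat K)) ◁ (λ_ X).hom) ≫ (λ_ X).hom := by
  coherence

lemma triv_middle_assoc {Y : ModuleCat.{u} K} (X : ModuleCat.{u} K) (act : X ⊗ Y ⟶ X) :
    ((λ_ X).hom ▷ Y) ≫ act =
      (α_ (𝟙_ (ModuleCat K)) X Y).hom ≫ ((𝟙_ (ModuleCat K)) ◁ act) ≫ (λ_ X).hom := by
  rw [MonoidalCategory.leftUnitor_naturality, MonoidalCategory.leftUnitor_tensor_hom]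
  simp

lemma triv_nat {X Y : ModuleCat.{u} K} (f : X ⟶ Y) :
    (λ_ X).hom ≫ f = ((𝟙_ (ModuleCat K)) ◁ f) ≫ (λ_ Y).hom :=
  (MonoidalCategory.leftUnitor_naturality f).symm

end Helpers

variable {K : Type u} [CommRing K] {a t t' : Alg K}

lemma base_actLeft (P : base K ⟶ t') :
    P.actLeft = (MonoidalCategory.leftUnitor P.X).hom := by
  have h := P.one_actLeft
  simpa [base, Mon.trivial] using (show MonoidalCategoryStruct.whiskerRight (𝟙 (base K).val.X) P.X ≫ P.actLeft =
    (MonoidalCategory.leftUnitor P.X).hom from h)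

/-- Forgetting the left `T`-action of a `T`-`A`-bimodule: restriction of
scalars along `K → T`. -/
def resBase (t a : Alg K) : (t ⟶ a) ⥤ (base K ⟶ a) where
  obj M :=
    { X := M.X
      actLeft := (MonoidalCategory.leftUnitor M.X).hom
      one_actLeft := triv_one_act M.X
      left_assoc := triv_left_assoc M.X
      actRight := M.actRight
      actRight_one := M.actRight_one
      right_assoc := M.right_assoc
      middle_assoc := triv_middle_assoc M.X M.actRight }
  map f := { hom := f.hom
             left_act_hom := triv_nat f.hom
             right_act_hom := f.right_act_hom }
  map_id _ := rfl
  map_comp _ _ := rfl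


variable {C : Coring a}

/-- The coaction of a `(T,C)`-bicomodule, as a morphism of the underlying
plain bimodules. -/
def resCoact (M : RightComodule t C) :
    (resBase t a).obj M.M ⟶ (resBase t a).obj M.M ≫ C.X where
  hom := M.coact.hom
  left_act_hom := by
    rw [base_actLeft ((resBase t a).obj M.M ≫ C.X)]
    exact triv_nat M.coact.hom
  right_act_hom := M.coact.right_act_hom

/-- A comodule morphism, restricted. -/
def resMap {M N : RightComodule t C} (f : M ⟶ N) :
    (resBase t a).obj M.M ⟶ (resBase t a).obj N.M where
  hom := f.f.hom
  left_act_hom := triv_nat f.f.hom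
  right_act_hom := f.f.right_act_hom

set_option maxHeartbeats 1600000 in
/-- Forgetting the left `T`-action of a `(T,C)`-bicomodule: the underlying
plain right `C`-comodule. -/
def resComod (t : Alg K) (C : Coring a) : RightComodule t C ⥤ Comod C where
  obj M :=
    { M := (resBase t a).obj M.M
      coact := resCoact M
      coassoc := by
        apply Bimod.hom_ext
        show (M.coact ≫ M.coact ▷ C.X ≫ (α_ M.M C.X C.X).hom).hom =
          (M.coact ≫ M.M ◁ C.comul).hom
        exact congrArg Bimod.Hom.hom M.coassoc
      counit := by
        apply Bimod.hom_ext
        show (M.coact ≫ M.M ◁ C.counit ≫ (ρ_ M.M).hom).hom = Bimod.Hom.hom (𝟙 M.M)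
        exact congrArg Bimod.Hom.hom M.counit }
  map {M N} f := ⟨resMap f, by
    apply Bimod.hom_ext
    show (M.coact ≫ f.f ▷ C.X).hom = (f.f ≫ N.coact).hom
    exact congrArg Bimod.Hom.hom f.colinear⟩
  map_id _ := rfl
  map_comp _ _ := rfl

end CoringSep

namespace CoringSep
open CategoryTheory Limits Bicategory

variable {K : Type u} [CommRing K] {a b : Alg K} {C : Coring a} {D : Coring b}

/-- A choice of cotensor-product functor `- □_C N : Comod-C ⥤ Comod-D` for a
`(C,D)`-bicomodule `N`: a functor together with natural equalizer data
exhibiting each `G(Y)` as the cotensor product `Y □_C N ⊆ Y ⊗_A N`. -/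
structure CotensorFunctor (N : Bicomodule C D) where
  G : Comod C ⥤ Comod D
  ι : ∀ Y : Comod C, (G.obj Y).M ⟶ Y.M ≫ N.M
  w : ∀ Y : Comod C, ι Y ≫ cotensorFst Y N.toLeft = ι Y ≫ cotensorSnd Y N.toLeft
  isLimit : ∀ Y : Comod C, IsLimit (Fork.ofι (ι Y) (w Y))
  colinear : ∀ Y : Comod C,
    (G.obj Y).coact ≫ ι Y ▷ D.X = ι Y ≫ Y.M ◁ N.rcoact ≫ (α_ Y.M N.M D.X).inv
  natural : ∀ {Y Y' : Comod C} (f : Y ⟶ Y'), (G.map f).f ≫ ι Y' = ι Y ≫ f.f ▷ N.M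

end CoringSep

namespace CoringSep
open CategoryTheory Limits Bicategory

section AuxStatement12

lemma wpp_hom_ext {𝒟 : Type*} [Category 𝒟] {F : WalkingParallelPair ⥤ 𝒟}
    {c : Cone F} (h : IsLimit c) {Z : 𝒟} {u v : Z ⟶ c.pt}
    (huv : u ≫ c.π.app WalkingParallelPair.zero = v ≫ c.π.app WalkingParallelPair.zero) :
    u = v := by
  apply h.hom_ext
  rintro (_ | _)
  · exact huv
  · rw [← c.w WalkingParallelPairHom.left, ← Category.assoc, huv, Category.assoc]

lemma wex_assoc {B : Type*} [Bicategory B] {x y z : B} {f g : x ⟶ y} {h i : y ⟶ z}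
    (η : f ⟶ g) (θ : h ⟶ i) {w : x ⟶ z} (k : g ≫ i ⟶ w) :
    f ◁ θ ≫ η ▷ i ≫ k = η ▷ h ≫ g ◁ θ ≫ k := by
  rw [← Category.assoc, Bicategory.whisker_exchange, Category.assoc]

variable {K : Type u} [CommRing K] {a b : Alg K} {C : Coring a} {D : Coring b}

/-- The cofree functor `- ⊗_A C : Mod-A ⥤ Comod-C`. -/
abbrev cofreeC (C : Coring a) : ((base K : Alg K) ⟶ a) ⥤ Comod C :=
  lextendF (base K) (coregular C)

/-- The forgetful functor is left adjoint to the cofree functor `- ⊗_A C`. -/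
def forgetAdj (C : Coring a) : forgetComod (base K) C ⊣ cofreeC C :=
  Adjunction.mkOfUnitCounit
  { unit :=
    { app := fun M => ⟨M.coact, by
        dsimp [cofreeC, lextendF, lextendObj, coregular, forgetComod]
        rw [← cancel_mono (α_ M.M C.X C.X).hom]
        simpa [Category.assoc] using M.coassoc⟩
      naturality := fun M M' f => by
        apply comodHom_ext'
        dsimp [cofreeC, lextendF, lextendObj, coregular, forgetComod]
        exact f.colinear.symm }
    counit :=
    { app := fun X => X ◁ C.counit ≫ (ρ_ X).hom
      naturality := fun X X' f => by
        dsimp [cofreeC, lextendF, lextendObj, coregular, forgetComod]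
        rw [← wex_assoc f C.counit ((ρ_ X').hom), Bicategory.rightUnitor_naturality]
        simp }
    left_triangle := by
      ext M
      dsimp [cofreeC, lextendF, lextendObj, coregular, forgetComod]
      simpa [Category.assoc] using M.counit
    right_triangle := by
      ext X
      dsimp [cofreeC, lextendF, lextendObj, coregular, forgetComod]
      simp
      rw [← Bicategory.whiskerLeft_comp, ← Bicategory.whiskerLeft_comp, C.counit_comul,
        Bicategory.whiskerLeft_id] }

section Main

variable (N : Bicomodule C D)

/-- The canonical map `X ⊗_A N ⟶ (X ⊗_A C) ⊗_A N` induced by the left coaction. -/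
def iotaP (X : (base K : Alg K) ⟶ a) :
    (X ≫ N.M : (base K : Alg K) ⟶ b) ⟶ ((cofreeC C).obj X).M ≫ N.M :=
  (X ◁ N.lcoact) ≫ (α_ X C.X N.M).inv

lemma wP (X : (base K : Alg K) ⟶ a) :
    iotaP N X ≫ cotensorFst ((cofreeC C).obj X) N.toLeft =
      iotaP N X ≫ cotensorSnd ((cofreeC C).obj X) N.toLeft := by
  have e1 : iotaP N X ≫ cotensorFst ((cofreeC C).obj X) N.toLeft =
      X ◁ (N.lcoact ≫ C.comul ▷ N.M ≫ (α_ C.X C.X N.M).hom) ≫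
        (α_ X C.X (C.X ≫ N.M)).inv ≫ (α_ (X ≫ C.X) C.X N.M).inv := by
    dsimp [iotaP, cotensorFst, cofreeC, lextendF, lextendObj, coregular, Bicomodule.toLeft]
    bicategory
  have e2 : iotaP N X ≫ cotensorSnd ((cofreeC C).obj X) N.toLeft =
      X ◁ (N.lcoact ≫ C.X ◁ N.lcoact) ≫
        (α_ X C.X (C.X ≫ N.M)).inv ≫ (α_ (X ≫ C.X) C.X N.M).inv := by
    dsimp [iotaP, cotensorSnd, cofreeC, lextendF, lextendObj, coregular, Bicomodule.toLeft]
    bicategory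
  rw [e1, e2, ← N.lcoassoc]

/-- Retraction of `iotaP` given by the counit of `C`. -/
def rP (X : (base K : Alg K) ⟶ a) :
    (((cofreeC C).obj X).M ≫ N.M : (base K : Alg K) ⟶ b) ⟶ X ≫ N.M :=
  (α_ X C.X N.M).hom ≫ X ◁ (C.counit ▷ N.M ≫ (λ_ N.M).hom)

lemma iotaP_rP (X : (base K : Alg K) ⟶ a) : iotaP N X ≫ rP N X = 𝟙 _ := by
  have e : iotaP N X ≫ rP N X =
      X ◁ (N.lcoact ≫ C.counit ▷ N.M ≫ (λ_ N.M).hom) := by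
    dsimp [iotaP, rP]
    bicategory
  rw [e, N.lcounit]
  simp

/-- The map killing the middle copy of `C` with the counit. -/
def TT (X : (base K : Alg K) ⟶ a) :
    ((((cofreeC C).obj X).M ≫ C.X) ≫ N.M : (base K : Alg K) ⟶ b) ⟶
      ((cofreeC C).obj X).M ≫ N.M :=
  (α_ X C.X C.X).hom ▷ N.M ≫ (α_ X (C.X ≫ C.X) N.M).hom ≫
    X ◁ ((C.counit ▷ C.X ≫ (λ_ C.X).hom) ▷ N.M) ≫ (α_ X C.X N.M).inv

lemma fst_TT (X : (base K : Alg K) ⟶ a) :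
    cotensorFst ((cofreeC C).obj X) N.toLeft ≫ TT N X = 𝟙 _ := by
  have e : cotensorFst ((cofreeC C).obj X) N.toLeft ≫ TT N X =
      (α_ X C.X N.M).hom ≫
        X ◁ ((C.comul ≫ C.counit ▷ C.X ≫ (λ_ C.X).hom) ▷ N.M) ≫ (α_ X C.X N.M).inv := by
    dsimp [cotensorFst, TT, cofreeC, lextendF, lextendObj, coregular, Bicomodule.toLeft]
    bicategory
  rw [e, C.counit_comul]
  simp
  rfl

lemma snd_TT (X : (base K : Alg K) ⟶ a) :
    cotensorSnd ((cofreeC C).obj X) N.toLeft ≫ TT N X = rP N X ≫ iotaP N X := by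
  have e1 : cotensorSnd ((cofreeC C).obj X) N.toLeft ≫ TT N X =
      (α_ X C.X N.M).hom ≫
        X ◁ (C.X ◁ N.lcoact ≫ C.counit ▷ (C.X ≫ N.M) ≫ (λ_ (C.X ≫ N.M)).hom) ≫
          (α_ X C.X N.M).inv := by
    dsimp [cotensorSnd, TT, cofreeC, lextendF, lextendObj, coregular, Bicomodule.toLeft]
    bicategory
  have e2 : rP N X ≫ iotaP N X =
      (α_ X C.X N.M).hom ≫
        X ◁ (C.counit ▷ N.M ≫ (λ_ N.M).hom ≫ N.lcoact) ≫ (α_ X C.X N.M).inv := by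
    dsimp [iotaP, rP]
    bicategory
  have inner : C.X ◁ N.lcoact ≫ C.counit ▷ (C.X ≫ N.M) ≫ (λ_ (C.X ≫ N.M)).hom =
      C.counit ▷ N.M ≫ (λ_ N.M).hom ≫ N.lcoact := by
    rw [wex_assoc C.counit N.lcoact, Bicategory.leftUnitor_naturality]
  rw [e1, e2, inner]

/-- The fork exhibiting `X ⊗_A N` as `(X ⊗_A C) □_C N`. -/
def isLimitP (X : (base K : Alg K) ⟶ a) : IsLimit (Fork.ofι (iotaP N X) (wP N X)) :=
  Fork.IsLimit.mk _ (fun c => c.ι ≫ rP N X)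
    (fun c => by
      show c.ι ≫ rP N X ≫ iotaP N X = c.ι
      erw [← snd_TT N X, ← Category.assoc, ← c.condition, Category.assoc, fst_TT N X]
      exact Category.comp_id _)
    (fun c m hm => by
      have hm' : m ≫ iotaP N X = c.ι := hm
      show m = c.ι ≫ rP N X
      rw [← hm', Category.assoc, iotaP_rP N X]
      exact (Category.comp_id m).symm)

variable (cG : CotensorFunctor N)

/-- The comparison isomorphism `X ⊗_A N ≅ (X ⊗_A C) □_C N` of the two equalizers. -/
def phiP (X : (base K : Alg K) ⟶ a) :
    (X ≫ N.M : (base K : Alg K) ⟶ b) ≅ (cG.G.obj ((cofreeC C).obj X)).M :=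
  IsLimit.conePointUniqueUpToIso (isLimitP N X) (cG.isLimit ((cofreeC C).obj X))

lemma phiP_hom_comp (X : (base K : Alg K) ⟶ a) :
    (phiP N cG X).hom ≫ cG.ι ((cofreeC C).obj X) = iotaP N X := by
  exact IsLimit.conePointUniqueUpToIso_hom_comp (isLimitP N X)
    (cG.isLimit ((cofreeC C).obj X)) WalkingParallelPair.zero

lemma cancel_iota (Y : Comod C) {Z : (base K : Alg K) ⟶ b} {u v : Z ⟶ (cG.G.obj Y).M}
    (h : u ≫ cG.ι Y = v ≫ cG.ι Y) : u = v := by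
  apply wpp_hom_ext (cG.isLimit Y)
  exact h

lemma cancel_iotaD
    (hpres : ∀ Y : Comod C, PreservesEqualizerOf (postF (base K) D.X)
      (cotensorFst Y N.toLeft) (cotensorSnd Y N.toLeft))
    (Y : Comod C) {Z : (base K : Alg K) ⟶ b} {u v : Z ⟶ (cG.G.obj Y).M ≫ D.X}
    (h : u ≫ cG.ι Y ▷ D.X = v ≫ cG.ι Y ▷ D.X) : u = v := by
  obtain ⟨hl⟩ := hpres Y _ (cG.isLimit Y)
  apply wpp_hom_ext hl
  exact h

lemma phiP_colinear
    (hpres : ∀ Y : Comod C, PreservesEqualizerOf (postF (base K) D.X)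
      (cotensorFst Y N.toLeft) (cotensorSnd Y N.toLeft))
    (X : (base K : Alg K) ⟶ a) :
    (lextendObj X N.toRight).coact ≫ (phiP N cG X).hom ▷ D.X =
      (phiP N cG X).hom ≫ (cG.G.obj ((cofreeC C).obj X)).coact := by
  apply cancel_iotaD N cG hpres ((cofreeC C).obj X)
  have key : (lextendObj X N.toRight).coact ≫ iotaP N X ▷ D.X =
      iotaP N X ≫ ((cofreeC C).obj X).M ◁ N.rcoact ≫
        (α_ ((cofreeC C).obj X).M N.M D.X).inv := by
    have e1 : (lextendObj X N.toRight).coact ≫ iotaP N X ▷ D.X =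
        X ◁ (N.rcoact ≫ N.lcoact ▷ D.X ≫ (α_ C.X N.M D.X).hom) ≫
          (α_ X C.X (N.M ≫ D.X)).inv ≫ (α_ (X ≫ C.X) N.M D.X).inv := by
      dsimp [iotaP, lextendObj, Bicomodule.toRight, cofreeC, lextendF, coregular]
      bicategory
    have e2 : iotaP N X ≫ ((cofreeC C).obj X).M ◁ N.rcoact ≫
        (α_ ((cofreeC C).obj X).M N.M D.X).inv =
        X ◁ (N.lcoact ≫ C.X ◁ N.rcoact) ≫
          (α_ X C.X (N.M ≫ D.X)).inv ≫ (α_ (X ≫ C.X) N.M D.X).inv := by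
      dsimp [iotaP, lextendObj, Bicomodule.toRight, cofreeC, lextendF, coregular]
      bicategory
    rw [e1, e2, N.compat]
  show (((X ◁ N.rcoact ≫ (α_ X N.M D.X).inv) ≫ (phiP N cG X).hom ▷ D.X) ≫
      cG.ι ((cofreeC C).obj X) ▷ D.X =
    ((phiP N cG X).hom ≫ (cG.G.obj ((cofreeC C).obj X)).coact) ≫ cG.ι ((cofreeC C).obj X) ▷ D.X)
  rw [Category.assoc, ← Bicategory.comp_whiskerRight, phiP_hom_comp,
    Category.assoc (phiP N cG X).hom, cG.colinear, ← Category.assoc, phiP_hom_comp]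
  exact key

lemma phiP_natural {X X' : (base K : Alg K) ⟶ a} (f : X ⟶ X') :
    f ▷ N.M ≫ (phiP N cG X').hom = (phiP N cG X).hom ≫ (cG.G.map ((cofreeC C).map f)).f := by
  apply cancel_iota N cG ((cofreeC C).obj X')
  rw [Category.assoc, phiP_hom_comp, Category.assoc, cG.natural, ← Category.assoc,
    phiP_hom_comp]
  show f ▷ N.M ≫ iotaP N X' = iotaP N X ≫ ((cofreeC C).map f).f ▷ N.M
  dsimp [iotaP, cofreeC, lextendF]
  show f ▷ N.M ≫ X' ◁ N.lcoact ≫ (α_ X' C.X N.M).inv =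
    (X ◁ N.lcoact ≫ (α_ X C.X N.M).inv) ≫ f ▷ C.X ▷ N.M
  rw [← wex_assoc f N.lcoact ((α_ X' C.X N.M).inv)]
  simp only [Category.assoc]
  bicategory

/-- The natural isomorphism `(- ⊗_A C) □_C N ≅ - ⊗_A N` of functors to `Comod-D`. -/
def isoFull
    (hpres : ∀ Y : Comod C, PreservesEqualizerOf (postF (base K) D.X)
      (cotensorFst Y N.toLeft) (cotensorSnd Y N.toLeft)) :
    (cofreeC C ⋙ cG.G : ((base K : Alg K) ⟶ a) ⥤ Comod D) ≅
      lextendF (base K) N.toRight :=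
  NatIso.ofComponents
    (fun X =>
      { hom := ⟨(phiP N cG X).inv, by
          show (cG.G.obj ((cofreeC C).obj X)).coact ≫ (phiP N cG X).inv ▷ D.X =
            (phiP N cG X).inv ≫ (lextendObj X N.toRight).coact
          have h := phiP_colinear N cG hpres X
          erw [← cancel_epi (phiP N cG X).hom, ← Category.assoc, ← h, Category.assoc,
            ← Bicategory.comp_whiskerRight, Iso.hom_inv_id, Bicategory.id_whiskerRight,
            Iso.hom_inv_id_assoc]
          exact Category.comp_id _⟩
        inv := ⟨(phiP N cG X).hom, phiP_colinear N cG hpres X⟩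
        hom_inv_id := by apply comodHom_ext'; exact Iso.inv_hom_id _
        inv_hom_id := by apply comodHom_ext'; exact Iso.hom_inv_id _ })
    (fun {X X'} f => by
      apply comodHom_ext'
      show (cG.G.map ((cofreeC C).map f)).f ≫ (phiP N cG X').inv =
        (phiP N cG X).inv ≫ f ▷ N.M
      rw [← cancel_mono (phiP N cG X').hom]
      simp only [Category.assoc, Iso.inv_hom_id, Category.comp_id]
      rw [phiP_natural N cG f, ← Category.assoc, Iso.inv_hom_id, Category.id_comp])

end Main

end AuxStatement12

/-- Let `N` be a `(C,D)`-bicomodule such that `D` (as a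
left `B`-module) preserves the equalizer of `(ρ_Y ⊗_A N, Y ⊗_A λ_N)` for
every right `C`-comodule `Y`.  If the cotensor functor
`- □_C N : Comod-C ⥤ Comod-D` has a left adjoint, then `N` is quasi-finite
as a right `D`-comodule, i.e. `- ⊗_A N : Mod-A ⥤ Comod-D` has a left
adjoint. -/
theorem statement12 {K : Type u} [CommRing K] {a b : Alg K}
    {C : Coring a} {D : Coring b} (N : Bicomodule C D)
    (hpres : ∀ Y : Comod C, PreservesEqualizerOf (postF (base K) D.X)
      (cotensorFst Y N.toLeft) (cotensorSnd Y N.toLeft))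
    (cG : CotensorFunctor N) (hadj : cG.G.IsRightAdjoint) :
    (lextendF (base K) N.toRight).IsRightAdjoint := by
  obtain ⟨L, ⟨adjL⟩⟩ := hadj.exists_leftAdjoint
  exact ⟨L ⋙ forgetComod (base K) C,
    ⟨(adjL.comp (forgetAdj C)).ofNatIsoRight (isoFull N cG hpres)⟩⟩

end CoringSep
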